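/- arXiv:0912.0509 — 7 statements merged into one kernel-verified Lean document; each statement's English description precedes it below -/
import Mathlib

section
/- Let X, Y be bounded R^d-valued random vectors with X ⪰ Y in the concave order and L(X) ≠ L(Y). Then for every strictly convex continuous function φ : R^d → R one has E[φ(X)] < E[φ(Y)]. -/
/-!
If `𝔼 φ(X) = 𝔼 φ(Y)` for a strictly convex `φ`, we show `𝔼 f(Y) ≤ 𝔼 f(X)` for every continuous
`f`; applied to `±f` this forces the laws to agree. Let `K` be a compact set carrying both laws
and `L` a bound on the subgradients `ℓₓ` of `φ` over `K`. The infimum `gₙ` of the affine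
majorants of `f - nφ` on `K` with slopes of norm at most `nL` is concave, so
`𝔼 f(Y) ≤ 𝔼 gₙ(Y) + n 𝔼 φ(Y) ≤ 𝔼 gₙ(X) + n 𝔼 φ(X)`. For `x ∈ K` and `c > f(x)`, strict
convexity and compactness give `f - c ≤ n (φ - φ(x) - ℓₓ(· - x))` on `K` for large `n`, which
exhibits an admissible affine majorant showing `gₙ(x) + nφ(x) ≤ c`. Hence `gₙ + nφ → f` boundedly
on `K`, and dominated convergence yields `𝔼 f(Y) ≤ 𝔼 f(X)`.
-/

open MeasureTheory Filter Topology Metric Set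
open scoped NNReal BoundedContinuousFunction

section Subgradient

variable {E : Type*} [NormedAddCommGroup E] [NormedSpace ℝ E] {φ : E → ℝ}

-- Hahn–Banach separates `(x, φ x)` from the open strict epigraph.
theorem ConvexOn.exists_subgradient (hφ : ConvexOn ℝ univ φ) (hφc : Continuous φ) (x : E) :
    ∃ ℓ : E →L[ℝ] ℝ, ∀ y, φ x + ℓ (y - x) ≤ φ y := by
  have hopen : IsOpen {p : E × ℝ | p.1 ∈ univ ∧ φ p.1 < p.2} := by
    simpa using isOpen_lt (hφc.comp continuous_fst) continuous_snd
  obtain ⟨F, hF⟩ := geometric_hahn_banach_open_point hφ.convex_strict_epigraph hopen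
    (x := (x, φ x)) (by simp)
  set g : E →L[ℝ] ℝ := F.comp (.inl ℝ E ℝ)
  set β := F (0, 1)
  have hF_apply : ∀ y t, F (y, t) = g y + t * β := fun y t => by
    rw [show ((y, t) : E × ℝ) = (y, 0) + t • (0, 1) by simp, map_add, map_smul, smul_eq_mul]
    rfl
  have hβ : β < 0 := by
    have := hF (x, φ x + 1) (by simp)
    rw [hF_apply, hF_apply] at this
    linarith
  have hsep : ∀ y, g y + φ y * β ≤ g x + φ x * β := fun y => by
    have hsub : Ioi (φ y) ⊆ {t | g y + t * β ≤ g x + φ x * β} := fun t ht => by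
      have := hF (y, t) ⟨trivial, ht⟩
      rw [hF_apply, hF_apply] at this
      exact this.le
    have hclosed : IsClosed {t : ℝ | g y + t * β ≤ g x + φ x * β} :=
      isClosed_le (by fun_prop) continuous_const
    exact (closure_Ioi (φ y) ▸ hclosed.closure_subset_iff.2 hsub) self_mem_Ici
  refine ⟨(-β)⁻¹ • g, fun y => ?_⟩
  have : (-β)⁻¹ * (g y - g x) ≤ φ y - φ x := by
    rw [inv_mul_le_iff₀ (neg_pos.2 hβ)]
    linarith [hsep y]
  show φ x + (-β)⁻¹ * g (y - x) ≤ φ y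
  rw [map_sub]
  linarith

theorem StrictConvexOn.exists_subgradient (hφ : StrictConvexOn ℝ univ φ) (hφc : Continuous φ)
    (x : E) : ∃ ℓ : E →L[ℝ] ℝ,
      (∀ y, φ x + ℓ (y - x) ≤ φ y) ∧ ∀ y ≠ x, φ x + ℓ (y - x) < φ y := by
  obtain ⟨ℓ, hℓ⟩ := hφ.convexOn.exists_subgradient hφc x
  refine ⟨ℓ, hℓ, fun y hyx => ?_⟩
  have hmid := hφ.2 (mem_univ x) (mem_univ y) hyx.symm (by norm_num : (0 : ℝ) < 2⁻¹)
    (by norm_num : (0 : ℝ) < 2⁻¹) (by norm_num)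
  have hsub := hℓ ((2⁻¹ : ℝ) • x + (2⁻¹ : ℝ) • y)
  rw [show (2⁻¹ : ℝ) • x + (2⁻¹ : ℝ) • y - x = (2⁻¹ : ℝ) • (y - x) by module, map_smul,
    smul_eq_mul] at hsub
  simp only [smul_eq_mul] at hmid
  linarith

theorem norm_subgradient_le_div {ℓ : E →L[ℝ] ℝ} {x : E} {r M : ℝ} (hr : 0 < r)
    (hℓ : ∀ y, φ x + ℓ (y - x) ≤ φ y) (hM : ∀ y ∈ closedBall x r, φ y ≤ φ x + M) :
    ‖ℓ‖ ≤ M / r := by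
  have hle : ∀ z ∈ closedBall (0 : E) r, ℓ z ≤ M := fun z hz => by
    have := hℓ (x + z)
    have := hM (x + z) (by simpa using hz)
    simp only [add_sub_cancel_left] at *
    linarith
  refine ContinuousLinearMap.opNorm_bound_of_ball_bound hr M ℓ fun z hz => ?_
  rw [Real.norm_eq_abs, abs_le]
  have := hle (-z) (by simpa using hz)
  rw [map_neg] at this
  exact ⟨by linarith, hle z hz⟩

theorem IsCompact.exists_forall_norm_subgradient_le [ProperSpace E] {K : Set E}
    (hK : IsCompact K) (hφc : Continuous φ) {ℓ : E → E →L[ℝ] ℝ}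
    (hℓ : ∀ x y, φ x + ℓ x (y - x) ≤ φ y) : ∃ L : ℝ≥0, ∀ x ∈ K, ‖ℓ x‖ ≤ L := by
  obtain ⟨B, hB⟩ := (hK.cthickening (r := 1)).exists_bound_of_continuousOn hφc.continuousOn
  refine ⟨(2 * B).toNNReal, fun x hx => ?_⟩
  have hbound : ∀ y ∈ closedBall x 1, φ y ≤ φ x + 2 * B := fun y hy => by
    have hx' := hB x (self_subset_cthickening K hx)
    have hy' := hB y (mem_cthickening_of_dist_le y x 1 K hx hy)
    rw [Real.norm_eq_abs, abs_le] at hx' hy'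
    linarith
  simpa using (norm_subgradient_le_div one_pos (hℓ x) hbound).trans (Real.le_coe_toNNReal _)

end Subgradient

section ConcaveMajorant

variable {E : Type*} [NormedAddCommGroup E] [NormedSpace ℝ E] {K : Set E} {L : ℝ≥0} {h : E → ℝ}

def affineMajorants (K : Set E) (L : ℝ≥0) (h : E → ℝ) : Set ((E →L[ℝ] ℝ) × ℝ) :=
  {q | ‖q.1‖ ≤ L ∧ ∀ y ∈ K, h y ≤ q.1 y + q.2}

/-- The slope bound `L` keeps this infimum of affine functions finite, hence concave and
`L`-Lipschitz, on all of `E`, not only on `K`. -/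
noncomputable def concaveMajorant (K : Set E) (L : ℝ≥0) (h : E → ℝ) (x : E) : ℝ :=
  ⨅ q : affineMajorants K L h, q.1.1 x + q.1.2

theorem affineMajorants_nonempty (hh : BddAbove (h '' K)) : (affineMajorants K L h).Nonempty := by
  obtain ⟨b, hb⟩ := hh
  exact ⟨(0, b), by simp, fun y hy => by simpa using hb (mem_image_of_mem h hy)⟩

theorem bddBelow_range_affineMajorants (hK : K.Nonempty) (x : E) :
    BddBelow (range fun q : affineMajorants K L h => q.1.1 x + q.1.2) := by
  obtain ⟨y, hy⟩ := hK
  refine ⟨h y - L * ‖x - y‖, ?_⟩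
  rintro _ ⟨⟨q, hqL, hqK⟩, rfl⟩
  have h1 := hqK y hy
  have h2 := neg_le_of_abs_le (q.1.le_of_opNorm_le hqL (x - y))
  rw [map_sub] at h2
  linarith

theorem concaveMajorant_le (hK : K.Nonempty) {q : (E →L[ℝ] ℝ) × ℝ}
    (hq : q ∈ affineMajorants K L h) (x : E) : concaveMajorant K L h x ≤ q.1 x + q.2 :=
  ciInf_le (bddBelow_range_affineMajorants hK x) ⟨q, hq⟩

theorem le_concaveMajorant (hh : BddAbove (h '' K)) {x : E} (hx : x ∈ K) :
    h x ≤ concaveMajorant K L h x :=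
  have := (affineMajorants_nonempty (L := L) hh).to_subtype
  le_ciInf fun q => q.2.2 x hx

theorem concaveOn_concaveMajorant (hK : K.Nonempty) (hh : BddAbove (h '' K)) :
    ConcaveOn ℝ univ (concaveMajorant K L h) := by
  refine ⟨convex_univ, fun x _ y _ a b ha hb hab => ?_⟩
  have := (affineMajorants_nonempty (L := L) hh).to_subtype
  refine le_ciInf fun q => ?_
  have hx := mul_le_mul_of_nonneg_left (concaveMajorant_le hK q.2 x) ha
  have hy := mul_le_mul_of_nonneg_left (concaveMajorant_le hK q.2 y) hb
  have hconst : a * q.1.2 + b * q.1.2 = q.1.2 := by rw [← add_mul, hab, one_mul]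
  simp only [smul_eq_mul, map_add, map_smul]
  linarith

theorem lipschitzWith_concaveMajorant (hK : K.Nonempty) (hh : BddAbove (h '' K)) :
    LipschitzWith L (concaveMajorant K L h) := by
  refine LipschitzWith.of_le_add_mul L fun x y => ?_
  have := (affineMajorants_nonempty (L := L) hh).to_subtype
  have hq : ∀ q : affineMajorants K L h,
      concaveMajorant K L h x - L * dist x y ≤ q.1.1 y + q.1.2 := fun q => by
    have h1 := concaveMajorant_le hK q.2 x
    have h2 := le_of_abs_le (q.1.1.le_of_opNorm_le q.2.1 (x - y))
    rw [map_sub] at h2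
    rw [dist_eq_norm]
    linarith
  have : concaveMajorant K L h x - L * dist x y ≤ concaveMajorant K L h y := le_ciInf hq
  linarith

end ConcaveMajorant

theorem IsCompact.eventually_forall_sub_le_nat_mul {α : Type*} [TopologicalSpace α] {K : Set α}
    (hK : IsCompact K) {f D : α → ℝ} {c : ℝ} (hf : Continuous f) (hD : Continuous D)
    (hD₀ : ∀ y ∈ K, 0 ≤ D y) (hpos : ∀ y ∈ K, c ≤ f y → 0 < D y) :
    ∀ᶠ n : ℕ in atTop, ∀ y ∈ K, f y - c ≤ n * D y := by
  obtain ⟨δ, hδ, hδD⟩ := (hK.inter_right (isClosed_le continuous_const hf)).exists_forall_le'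
    hD.continuousOn fun y hy => hpos y hy.1 hy.2
  obtain ⟨M, hM⟩ := hK.bddAbove_image hf.continuousOn
  filter_upwards [tendsto_natCast_atTop_atTop.eventually_ge_atTop ((M - c) / δ)]
    with n hn y hy
  rcases le_or_gt c (f y) with hcy | hcy
  · calc f y - c ≤ M - c := by linarith [hM (mem_image_of_mem f hy)]
      _ = (M - c) / δ * δ := (div_mul_cancel₀ _ hδ.ne').symm
      _ ≤ n * D y := mul_le_mul hn (hδD y ⟨hy, hcy⟩) hδ.le n.cast_nonneg
  · nlinarith [hD₀ y hy, n.cast_nonneg (α := ℝ)]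

theorem IsCompact.bddAbove_image_sub_nat_mul {α : Type*} [TopologicalSpace α] {K : Set α}
    (hK : IsCompact K) {f φ : α → ℝ} (hf : Continuous f) (hφ : Continuous φ) (n : ℕ) :
    BddAbove ((fun y => f y - n * φ y) '' K) :=
  hK.bddAbove_image (by fun_prop)

section ConcaveApprox

variable {E : Type*} [NormedAddCommGroup E] [NormedSpace ℝ E] {K : Set E} {L : ℝ≥0}
  {φ f : E → ℝ}

noncomputable def concaveApprox (K : Set E) (L : ℝ≥0) (φ f : E → ℝ) (n : ℕ) : E → ℝ :=
  concaveMajorant K (n * L) fun y => f y - n * φ y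

theorem concaveOn_concaveApprox (hK : IsCompact K) (hKne : K.Nonempty) (hf : Continuous f)
    (hφ : Continuous φ) (n : ℕ) : ConcaveOn ℝ univ (concaveApprox K L φ f n) :=
  concaveOn_concaveMajorant hKne (hK.bddAbove_image_sub_nat_mul hf hφ n)

theorem continuous_concaveApprox (hK : IsCompact K) (hKne : K.Nonempty) (hf : Continuous f)
    (hφ : Continuous φ) (n : ℕ) : Continuous (concaveApprox K L φ f n) :=
  (lipschitzWith_concaveMajorant hKne (hK.bddAbove_image_sub_nat_mul hf hφ n)).continuous

theorem le_concaveApprox_add (hK : IsCompact K) (hf : Continuous f) (hφ : Continuous φ)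
    {x : E} (hx : x ∈ K) (n : ℕ) : f x ≤ concaveApprox K L φ f n x + n * φ x := by
  have := le_concaveMajorant (L := n * L) (hK.bddAbove_image_sub_nat_mul hf hφ n) hx
  rw [concaveApprox]
  linarith

theorem concaveApprox_add_le (hKne : K.Nonempty) {x : E} {ℓ : E →L[ℝ] ℝ} (hℓ : ‖ℓ‖ ≤ L)
    {n : ℕ} {c : ℝ} (hc : ∀ y ∈ K, f y - c ≤ n * (φ y - φ x - ℓ (y - x))) :
    concaveApprox K L φ f n x + n * φ x ≤ c := by
  have hq : (-(n : ℝ) • ℓ, c - n * φ x + n * ℓ x) ∈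
      affineMajorants K (n * L) (fun y => f y - n * φ y) := by
    refine ⟨?_, fun y hy => ?_⟩
    · rw [norm_smul, norm_neg, Real.norm_natCast, NNReal.coe_mul, NNReal.coe_natCast]
      exact mul_le_mul_of_nonneg_left hℓ n.cast_nonneg
    · have := hc y hy
      simp only [map_sub, smul_apply, smul_eq_mul] at this ⊢
      linarith
  have := concaveMajorant_le hKne hq x
  simp only [smul_apply, smul_eq_mul] at this
  rw [concaveApprox]
  linarith

theorem abs_concaveApprox_add_le (hK : IsCompact K) (hf : Continuous f) (hφ : Continuous φ)
    {x : E} (hx : x ∈ K) {ℓ : E →L[ℝ] ℝ} (hℓL : ‖ℓ‖ ≤ L) (hℓ : ∀ y, φ x + ℓ (y - x) ≤ φ y)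
    {B : ℝ} (hB : ∀ y ∈ K, ‖f y‖ ≤ B) (n : ℕ) :
    |concaveApprox K L φ f n x + n * φ x| ≤ B := by
  have hfB : ∀ y ∈ K, |f y| ≤ B := hB
  refine abs_le.2 ⟨?_, concaveApprox_add_le ⟨x, hx⟩ hℓL fun y hy => ?_⟩
  · linarith [le_concaveApprox_add (L := L) hK hf hφ hx n, neg_le_of_abs_le (hfB x hx)]
  · nlinarith [le_of_abs_le (hfB y hy), hℓ y, n.cast_nonneg (α := ℝ)]

theorem tendsto_concaveApprox_add (hK : IsCompact K) (hf : Continuous f) (hφ : Continuous φ)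
    {x : E} (hx : x ∈ K) {ℓ : E →L[ℝ] ℝ} (hℓL : ‖ℓ‖ ≤ L) (hℓ : ∀ y, φ x + ℓ (y - x) ≤ φ y)
    (hℓ_strict : ∀ y ≠ x, φ x + ℓ (y - x) < φ y) :
    Tendsto (fun n : ℕ => concaveApprox K L φ f n x + n * φ x) atTop (𝓝 (f x)) := by
  refine tendsto_order.2 ⟨fun a ha => .of_forall fun n =>
    ha.trans_le (le_concaveApprox_add hK hf hφ hx n), fun b hb => ?_⟩
  obtain ⟨c, hxc, hcb⟩ := exists_between hb
  have hD : Continuous fun y => φ y - φ x - ℓ (y - x) := by fun_prop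
  have hpos : ∀ y ∈ K, c ≤ f y → 0 < φ y - φ x - ℓ (y - x) := fun y _ hcy => by
    have hyx : y ≠ x := by rintro rfl; linarith
    linarith [hℓ_strict y hyx]
  filter_upwards [hK.eventually_forall_sub_le_nat_mul hf hD (fun y _ => by linarith [hℓ y]) hpos]
    with n hn
  exact (concaveApprox_add_le ⟨x, hx⟩ hℓL hn).trans_lt hcb

end ConcaveApprox

section Probability

variable {Ω E : Type*} [MeasurableSpace Ω] {μ : Measure Ω} [MeasurableSpace E]

theorem integrable_comp_of_forall_mem [TopologicalSpace E] [OpensMeasurableSpace E]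
    [IsFiniteMeasure μ] {K : Set E} (hK : IsCompact K) {X : Ω → E} (hX : Measurable X)
    (hXK : ∀ ω, X ω ∈ K) {g : E → ℝ} (hg : Continuous g) : Integrable (fun ω => g (X ω)) μ := by
  obtain ⟨B, hB⟩ := hK.exists_bound_of_continuousOn hg.continuousOn
  exact .of_bound (hg.measurable.comp hX).aestronglyMeasurable B (.of_forall fun ω => hB _ (hXK ω))

theorem integral_comp_le_of_integral_strictConvexOn_eq [NormedAddCommGroup E] [NormedSpace ℝ E]
    [ProperSpace E] [OpensMeasurableSpace E] [IsFiniteMeasure μ] {K : Set E} (hK : IsCompact K)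
    {X Y : Ω → E} (hX : Measurable X) (hY : Measurable Y) (hXK : ∀ ω, X ω ∈ K)
    (hYK : ∀ ω, Y ω ∈ K)
    (hdom : ∀ ψ : E → ℝ, ConvexOn ℝ univ ψ → Continuous ψ →
      ∫ ω, ψ (X ω) ∂μ ≤ ∫ ω, ψ (Y ω) ∂μ)
    {φ : E → ℝ} (hφ : StrictConvexOn ℝ univ φ) (hφc : Continuous φ)
    (heq : ∫ ω, φ (X ω) ∂μ = ∫ ω, φ (Y ω) ∂μ) {f : E → ℝ} (hf : Continuous f) :
    ∫ ω, f (Y ω) ∂μ ≤ ∫ ω, f (X ω) ∂μ := by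
  rcases K.eq_empty_or_nonempty with rfl | hKne
  · have : IsEmpty Ω := ⟨fun ω => hXK ω⟩
    simp [Measure.eq_zero_of_isEmpty μ]
  choose ℓ hℓ hℓ_strict using hφ.exists_subgradient hφc
  obtain ⟨L, hL⟩ := hK.exists_forall_norm_subgradient_le hφc hℓ
  obtain ⟨B, hB⟩ := hK.exists_bound_of_continuousOn hf.continuousOn
  have hint : ∀ {Z : Ω → E}, Measurable Z → (∀ ω, Z ω ∈ K) → ∀ {ψ : E → ℝ}, Continuous ψ →
      Integrable (fun ω => ψ (Z ω)) μ := fun hZ hZK _ hψ =>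
    integrable_comp_of_forall_mem hK hZ hZK hψ
  have hbound : ∀ n : ℕ, ∫ ω, f (Y ω) ∂μ ≤
      ∫ ω, concaveApprox K L φ f n (X ω) + n * φ (X ω) ∂μ := fun n => by
    have hg := continuous_concaveApprox (L := L) hK hKne hf hφc n
    have hconc : ∫ ω, concaveApprox K L φ f n (Y ω) ∂μ ≤
        ∫ ω, concaveApprox K L φ f n (X ω) ∂μ := by
      simpa [integral_neg] using hdom _ (concaveOn_concaveApprox hK hKne hf hφc n).neg hg.neg
    calc ∫ ω, f (Y ω) ∂μ ≤ ∫ ω, concaveApprox K L φ f n (Y ω) + n * φ (Y ω) ∂μ :=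
          integral_mono (hint hY hYK hf) ((hint hY hYK hg).add ((hint hY hYK hφc).const_mul _))
            fun ω => le_concaveApprox_add hK hf hφc (hYK ω) n
      _ = ∫ ω, concaveApprox K L φ f n (Y ω) ∂μ + n * ∫ ω, φ (X ω) ∂μ := by
          rw [integral_add (hint hY hYK hg) ((hint hY hYK hφc).const_mul _), integral_const_mul,
            heq]
      _ ≤ ∫ ω, concaveApprox K L φ f n (X ω) ∂μ + n * ∫ ω, φ (X ω) ∂μ := by gcongr
      _ = ∫ ω, concaveApprox K L φ f n (X ω) + n * φ (X ω) ∂μ := by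
          rw [integral_add (hint hX hXK hg) ((hint hX hXK hφc).const_mul _), integral_const_mul]
  have hlim : Tendsto (fun n : ℕ => ∫ ω, concaveApprox K L φ f n (X ω) + n * φ (X ω) ∂μ)
      atTop (𝓝 (∫ ω, f (X ω) ∂μ)) := by
    refine tendsto_integral_of_dominated_convergence (fun _ => B)
      (fun n => ((hint hX hXK (continuous_concaveApprox hK hKne hf hφc n)).add
        ((hint hX hXK hφc).const_mul _)).aestronglyMeasurable) (integrable_const B)
      (fun n => .of_forall fun ω => ?_) (.of_forall fun ω => ?_)
    · exact abs_concaveApprox_add_le hK hf hφc (hXK ω) (hL _ (hXK ω)) (hℓ _) hB n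
    · exact tendsto_concaveApprox_add hK hf hφc (hXK ω) (hL _ (hXK ω)) (hℓ _) (hℓ_strict _)
  exact ge_of_tendsto' hlim hbound

theorem map_eq_of_forall_integral_comp_le [TopologicalSpace E] [HasOuterApproxClosed E]
    [BorelSpace E] [IsFiniteMeasure μ] {X Y : Ω → E} (hX : AEMeasurable X μ)
    (hY : AEMeasurable Y μ) (h : ∀ f : E →ᵇ ℝ, ∫ ω, f (Y ω) ∂μ ≤ ∫ ω, f (X ω) ∂μ) :
    μ.map X = μ.map Y := by
  refine ext_of_forall_integral_eq_of_IsFiniteMeasure fun f => ?_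
  rw [integral_map hX f.continuous.aestronglyMeasurable,
    integral_map hY f.continuous.aestronglyMeasurable]
  refine le_antisymm ?_ (h f)
  simpa [integral_neg] using h (-f)

end Probability

/-- if X dominates Y in the concave order and the laws differ,
then every strictly convex continuous function has strictly smaller expectation at X. -/
theorem stmt2 {Ω : Type*} [MeasurableSpace Ω] (μ : Measure Ω) [IsProbabilityMeasure μ]
    {d : ℕ} (X Y : Ω → (Fin d → ℝ))
    (hXm : Measurable X) (hYm : Measurable Y)
    (hXb : ∃ C, ∀ ω, ‖X ω‖ ≤ C) (hYb : ∃ C, ∀ ω, ‖Y ω‖ ≤ C)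
    (hdom : ∀ φ : (Fin d → ℝ) → ℝ, ConvexOn ℝ Set.univ φ →
      ∫ ω, φ (X ω) ∂μ ≤ ∫ ω, φ (Y ω) ∂μ)
    (hneq : μ.map X ≠ μ.map Y) :
    ∀ φ : (Fin d → ℝ) → ℝ, StrictConvexOn ℝ Set.univ φ → Continuous φ →
      ∫ ω, φ (X ω) ∂μ < ∫ ω, φ (Y ω) ∂μ := by
  intro φ hφ hφc
  refine (hdom φ hφ.convexOn).lt_of_ne fun heq => hneq ?_
  obtain ⟨C₁, hC₁⟩ := hXb
  obtain ⟨C₂, hC₂⟩ := hYb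
  have hXK : ∀ ω, X ω ∈ closedBall 0 (max C₁ C₂) := fun ω =>
    mem_closedBall_zero_iff.2 ((hC₁ ω).trans (le_max_left _ _))
  have hYK : ∀ ω, Y ω ∈ closedBall 0 (max C₁ C₂) := fun ω =>
    mem_closedBall_zero_iff.2 ((hC₂ ω).trans (le_max_right _ _))
  exact map_eq_of_forall_integral_comp_le hXm.aemeasurable hYm.aemeasurable fun f =>
    integral_comp_le_of_integral_strictConvexOn_eq (isCompact_closedBall 0 _) hXm hYm hXK hYK
      (fun ψ hψ _ => hdom ψ hψ) hφ hφc heq f.continuous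
end

section
/- If X₁ and X₂ are bounded real random variables that are comonotone, then the quantile function of X₁ + X₂ equals the sum of the quantile functions: F_{X₁+X₂}^{-1} = F_{X₁}^{-1} + F_{X₂}^{-1} almost everywhere on (0,1). -/
/-!
Write `q_ν` for the quantile function of `ν`. Comonotonicity makes the sets `{X ≤ a}` and
`{Y ≤ b}` nested up to a null set, so `P(X + Y ≤ q_X(t) + q_Y(t)) ≥ min(P(X ≤ q_X(t)),
P(Y ≤ q_Y(t))) ≥ t`, i.e. `q_{X+Y} ≤ q_X + q_Y` on `(0, 1)`. Since `q_ν` pushes the uniform law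
on `(0, 1)` forward to `ν`, both sides integrate to `𝔼[X] + 𝔼[Y]`, so the inequality is an
almost-everywhere equality.
-/

open MeasureTheory

/-- Comonotonicity of a pair of real random variables. -/
def Comonotone {Ω : Type*} [MeasurableSpace Ω] (μ : Measure Ω) (X Y : Ω → ℝ) : Prop :=
  ∀ᵐ q ∂(μ.prod μ), 0 ≤ (X q.1 - X q.2) * (Y q.1 - Y q.2)

/-- Quantile function (generalized inverse of the cdf) of a law on ℝ. -/
noncomputable def quantileFn (ν : Measure ℝ) (t : ℝ) : ℝ :=
  sInf {x | t ≤ ProbabilityTheory.cdf ν x}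

open Set ProbabilityTheory

section QuantileTransform

variable {ν : Measure ℝ} {t : ℝ}

lemma nonempty_setOf_le_cdf (ht : t < 1) : {x | t ≤ cdf ν x}.Nonempty :=
  (((tendsto_cdf_atTop ν).eventually (eventually_gt_nhds ht)).exists).imp fun _ => le_of_lt

lemma bddBelow_setOf_le_cdf (ht : 0 < t) : BddBelow {x | t ≤ cdf ν x} := by
  obtain ⟨y, hy⟩ := ((tendsto_cdf_atBot ν).eventually (eventually_lt_nhds ht)).exists
  exact ⟨y, fun z hz => le_of_not_ge fun hzy => (hz.trans (monotone_cdf ν hzy)).not_gt hy⟩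

lemma le_cdf_quantileFn (ht₀ : 0 < t) (ht₁ : t < 1) : t ≤ cdf ν (quantileFn ν t) := by
  have hcont : ContinuousWithinAt (cdf ν) {x | t ≤ cdf ν x} (quantileFn ν t) :=
    ((cdf ν).right_continuous _).mono fun x hx => csInf_le (bddBelow_setOf_le_cdf ht₀) hx
  have hmem := hcont.mem_closure
    (csInf_mem_closure (nonempty_setOf_le_cdf ht₁) (bddBelow_setOf_le_cdf ht₀))
    (t := Ici t) fun _ hx => hx
  exact isClosed_Ici.closure_subset hmem

lemma quantileFn_le_iff {x : ℝ} (ht₀ : 0 < t) (ht₁ : t < 1) :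
    quantileFn ν t ≤ x ↔ t ≤ cdf ν x :=
  ⟨fun h => (le_cdf_quantileFn ht₀ ht₁).trans (monotone_cdf ν h),
    fun h => csInf_le (bddBelow_setOf_le_cdf ht₀) h⟩

lemma monotoneOn_quantileFn : MonotoneOn (quantileFn ν) (Ioo 0 1) :=
  fun _ hs _ ht hst => (quantileFn_le_iff hs.1 hs.2).mpr (hst.trans (le_cdf_quantileFn ht.1 ht.2))

lemma aemeasurable_quantileFn : AEMeasurable (quantileFn ν) (volume.restrict (Ioo 0 1)) :=
  aemeasurable_restrict_of_monotoneOn measurableSet_Ioo monotoneOn_quantileFn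

lemma volume_Iic_inter_Ioo_zero_one {c : ℝ} (hc : c ≤ 1) :
    volume (Iic c ∩ Ioo 0 1) = ENNReal.ofReal c :=
  calc volume (Iic c ∩ Ioo 0 1) = volume (Iic c ∩ Ioc 0 1) :=
        measure_congr ((ae_eq_refl _).inter Ioo_ae_eq_Ioc)
    _ = ENNReal.ofReal c := by rw [Iic_inter_Ioc_of_le hc, Real.volume_Ioc, sub_zero]

theorem map_quantileFn_restrict_Ioo [IsProbabilityMeasure ν] :
    (volume.restrict (Ioo 0 1)).map (quantileFn ν) = ν := by
  refine Measure.ext_of_Iic _ _ fun x => ?_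
  have hpre : quantileFn ν ⁻¹' Iic x ∩ Ioo 0 1 = Iic (cdf ν x) ∩ Ioo 0 1 := by
    ext t
    simp only [mem_inter_iff, mem_preimage, mem_Iic, and_congr_left_iff]
    exact fun ht => quantileFn_le_iff ht.1 ht.2
  rw [Measure.map_apply_of_aemeasurable aemeasurable_quantileFn measurableSet_Iic,
    Measure.restrict_apply' measurableSet_Ioo, hpre,
    volume_Iic_inter_Ioo_zero_one (cdf_le_one ν x), ofReal_cdf]

theorem integral_quantileFn [IsProbabilityMeasure ν] :
    ∫ t in Ioo 0 1, quantileFn ν t = ∫ x, x ∂ν := by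
  conv_rhs => rw [← map_quantileFn_restrict_Ioo (ν := ν)]
  exact (integral_map aemeasurable_quantileFn aestronglyMeasurable_id).symm

theorem integrableOn_quantileFn [IsProbabilityMeasure ν] (hν : Integrable id ν) :
    IntegrableOn (quantileFn ν) (Ioo 0 1) := by
  rw [← map_quantileFn_restrict_Ioo (ν := ν)] at hν
  exact (integrable_map_measure aestronglyMeasurable_id aemeasurable_quantileFn).mp hν

end QuantileTransform

section Pushforward

variable {Ω : Type*} [MeasurableSpace Ω] {μ : Measure Ω} [IsProbabilityMeasure μ] {X : Ω → ℝ}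

lemma le_cdf_map_iff (hX : Measurable X) {t x : ℝ} :
    t ≤ cdf (μ.map X) x ↔ ENNReal.ofReal t ≤ μ (X ⁻¹' Iic x) := by
  have := Measure.isProbabilityMeasure_map (μ := μ) hX.aemeasurable
  rw [← Measure.map_apply hX measurableSet_Iic, ← ofReal_cdf,
    ENNReal.ofReal_le_ofReal_iff (cdf_nonneg _ _)]

theorem integral_quantileFn_map (hX : AEMeasurable X μ) :
    ∫ t in Ioo 0 1, quantileFn (μ.map X) t = ∫ ω, X ω ∂μ := by
  have := Measure.isProbabilityMeasure_map (μ := μ) hX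
  rw [integral_quantileFn]
  exact integral_map hX aestronglyMeasurable_id

theorem integrableOn_quantileFn_map (hX : Integrable X μ) :
    IntegrableOn (quantileFn (μ.map X)) (Ioo 0 1) := by
  have := Measure.isProbabilityMeasure_map (μ := μ) hX.aemeasurable
  exact integrableOn_quantileFn
    ((integrable_map_measure aestronglyMeasurable_id hX.aemeasurable).mpr hX)

end Pushforward

section Comonotone

variable {Ω : Type*} [MeasurableSpace Ω] {μ : Measure Ω} {X Y : Ω → ℝ}

/- A point of `{X ≤ a} \ {Y ≤ b}` and a point of `{Y ≤ b} \ {X ≤ a}` form a discordant pair,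
so one of the two differences is null. -/
lemma Comonotone.min_measure_le_measure_inter [SFinite μ] (hcom : Comonotone μ X Y)
    (hX : Measurable X) (hY : Measurable Y) (a b : ℝ) :
    min (μ (X ⁻¹' Iic a)) (μ (Y ⁻¹' Iic b)) ≤ μ (X ⁻¹' Iic a ∩ Y ⁻¹' Iic b) := by
  set A := X ⁻¹' Iic a
  set B := Y ⁻¹' Iic b
  have hdiscordant : (A \ B) ×ˢ (B \ A) ⊆ {q | ¬ 0 ≤ (X q.1 - X q.2) * (Y q.1 - Y q.2)} := by
    rintro ⟨p, q⟩ ⟨⟨hpA, hpB⟩, hqB, hqA⟩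
    simp only [A, B, mem_preimage, mem_Iic, not_le] at hpA hpB hqA hqB
    exact not_le.mpr (mul_neg_of_neg_of_pos (by linarith) (by linarith))
  have hnull : μ (A \ B) * μ (B \ A) = 0 := by
    rw [← Measure.prod_prod]
    exact measure_mono_null hdiscordant (ae_iff.mp hcom)
  rcases mul_eq_zero.mp hnull with h | h
  · calc min (μ A) (μ B) ≤ μ A := min_le_left _ _
      _ = μ (A ∩ B) := by rw [← measure_inter_add_sdiff A (hY measurableSet_Iic), h, add_zero]
  · calc min (μ A) (μ B) ≤ μ B := min_le_right _ _
      _ = μ (A ∩ B) := by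
        rw [← measure_inter_add_sdiff B (hX measurableSet_Iic), h, add_zero, inter_comm]

variable [IsProbabilityMeasure μ]

theorem Comonotone.quantileFn_add_le (hcom : Comonotone μ X Y) (hX : Measurable X)
    (hY : Measurable Y) {t : ℝ} (ht₀ : 0 < t) (ht₁ : t < 1) :
    quantileFn (μ.map (fun ω => X ω + Y ω)) t
      ≤ quantileFn (μ.map X) t + quantileFn (μ.map Y) t := by
  set a := quantileFn (μ.map X) t
  set b := quantileFn (μ.map Y) t
  have hsub : X ⁻¹' Iic a ∩ Y ⁻¹' Iic b ⊆ (fun ω => X ω + Y ω) ⁻¹' Iic (a + b) :=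
    fun ω (hω : X ω ≤ a ∧ Y ω ≤ b) => show X ω + Y ω ≤ a + b from add_le_add hω.1 hω.2
  rw [quantileFn_le_iff ht₀ ht₁, le_cdf_map_iff (X := fun ω => X ω + Y ω) (hX.add hY)]
  calc ENNReal.ofReal t
      ≤ min (μ (X ⁻¹' Iic a)) (μ (Y ⁻¹' Iic b)) :=
        le_min ((le_cdf_map_iff hX).mp (le_cdf_quantileFn ht₀ ht₁))
          ((le_cdf_map_iff hY).mp (le_cdf_quantileFn ht₀ ht₁))
    _ ≤ μ (X ⁻¹' Iic a ∩ Y ⁻¹' Iic b) := hcom.min_measure_le_measure_inter hX hY a b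
    _ ≤ _ := measure_mono hsub

theorem Comonotone.quantileFn_add_ae_eq (hcom : Comonotone μ X Y) (hX : Measurable X)
    (hY : Measurable Y) (hXi : Integrable X μ) (hYi : Integrable Y μ) :
    quantileFn (μ.map (fun ω => X ω + Y ω))
      =ᵐ[volume.restrict (Ioo 0 1)] quantileFn (μ.map X) + quantileFn (μ.map Y) := by
  have hle : quantileFn (μ.map (fun ω => X ω + Y ω))
      ≤ᵐ[volume.restrict (Ioo 0 1)] quantileFn (μ.map X) + quantileFn (μ.map Y) := by
    filter_upwards [ae_restrict_mem measurableSet_Ioo] with t ht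
    exact hcom.quantileFn_add_le hX hY ht.1 ht.2
  refine (integral_eq_iff_of_ae_le (integrableOn_quantileFn_map (hXi.add hYi))
    ((integrableOn_quantileFn_map hXi).add (integrableOn_quantileFn_map hYi)) hle).mp ?_
  simp only [Pi.add_apply]
  rw [integral_add (integrableOn_quantileFn_map hXi) (integrableOn_quantileFn_map hYi),
    integral_quantileFn_map (hX.add hY).aemeasurable, integral_quantileFn_map hX.aemeasurable,
    integral_quantileFn_map hY.aemeasurable]
  exact integral_add hXi hYi

end Comonotone

/-- for comonotone random variables the quantile function of the sum
is the sum of the quantile functions, a.e. on (0,1). -/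
theorem stmt6 {Ω : Type*} [MeasurableSpace Ω] (μ : Measure Ω) [IsProbabilityMeasure μ]
    (X₁ X₂ : Ω → ℝ) (h₁m : Measurable X₁) (h₂m : Measurable X₂)
    (h₁b : ∃ C, ∀ ω, |X₁ ω| ≤ C) (h₂b : ∃ C, ∀ ω, |X₂ ω| ≤ C)
    (hcom : Comonotone μ X₁ X₂) :
    ∀ᵐ t ∂(volume.restrict (Set.Ioo (0:ℝ) 1)),
      quantileFn (μ.map (fun ω => X₁ ω + X₂ ω)) t
        = quantileFn (μ.map X₁) t + quantileFn (μ.map X₂) t := by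
  have integrable_of_bounded {X : Ω → ℝ} (hX : Measurable X) (hb : ∃ C, ∀ ω, |X ω| ≤ C) :
      Integrable X μ :=
    let ⟨C, hC⟩ := hb
    .of_bound hX.aestronglyMeasurable C (ae_of_all _ hC)
  exact hcom.quantileFn_add_ae_eq h₁m h₂m (integrable_of_bounded h₁m h₁b)
    (integrable_of_bounded h₂m h₂b)
end

section
/- A family (X₁,...,X_p) of real random variables is comonotone if and only if there exist nondecreasing 1-Lipschitz functions f₁,...,f_p : R → R with Σᵢ fᵢ(x) = x for all x, such that Xᵢ = fᵢ(X) a.s. for all i, where X = Σᵢ Xᵢ. -/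
/-!
Comonotonicity of every pair means that the law of `(X₁, …, X_p)` is carried by a chain for the
coordinatewise order: two incomparable points of the support would have neighbourhoods `U`, `W`
such that `U × W` has positive product measure and some pair of coordinates is strictly discordant
on it. On a chain `T`, the map `v ↦ ∑ vᵢ` is an order embedding, and `∑ vᵢ ↦ v` extends to
monotone functions on `ℝ` summing to the identity by induction on `p`: split off the last
coordinate, extend the partial sum of the others by the largest monotone 1-Lipschitz extension,
and compose. Monotone functions summing to the identity are 1-Lipschitz, each increment being
bounded by the sum of all of them. Conversely, monotone functions of a common variable are
pairwise comonotone.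
-/

open MeasureTheory Finset

theorem le_or_le_of_forall_sub_mul_sub_nonneg {ι α : Type*} [Ring α] [LinearOrder α]
    [IsStrictOrderedRing α] {v w : ι → α} (h : ∀ i j, 0 ≤ (v i - w i) * (v j - w j)) :
    v ≤ w ∨ w ≤ v := by
  by_contra! hvw
  obtain ⟨⟨i, hi⟩, ⟨j, hj⟩⟩ : (∃ i, w i < v i) ∧ ∃ j, v j < w j := by
    simpa [Pi.le_def, and_comm] using hvw
  exact (h i j).not_gt (mul_neg_of_pos_of_neg (sub_pos.2 hi) (sub_neg.2 hj))

theorem MeasureTheory.Measure.rel_of_ae_prod_of_mem_support {X Y : Type*}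
    [TopologicalSpace X] [MeasurableSpace X] [TopologicalSpace Y] [MeasurableSpace Y]
    {μ : Measure X} {ν : Measure Y} [SFinite ν] {R : X → Y → Prop}
    (hR : IsClosed {q : X × Y | R q.1 q.2}) (h : ∀ᵐ q ∂μ.prod ν, R q.1 q.2)
    {x : X} {y : Y} (hx : x ∈ μ.support) (hy : y ∈ ν.support) : R x y := by
  by_contra hxy
  obtain ⟨U, W, hU, hW, hxU, hyW, hUW⟩ := isOpen_prod_iff.1 hR.isOpen_compl x y hxy
  have hpos : 0 < μ.prod ν (U ×ˢ W) := by
    rw [Measure.prod_prod]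
    exact ENNReal.mul_pos ((mem_support_iff_forall x).1 hx U (hU.mem_nhds hxU)).ne'
      ((mem_support_iff_forall y).1 hy W (hW.mem_nhds hyW)).ne'
  exact hpos.ne' (measure_mono_null hUW (ae_iff.1 h))

theorem isChain_support_map_of_comonotone {Ω ι : Type*} [MeasurableSpace Ω] {μ : Measure Ω}
    [SigmaFinite μ] [Countable ι] {X : ι → Ω → ℝ} (hX : ∀ i, Measurable (X i))
    (h : ∀ i j, Comonotone μ (X i) (X j)) :
    IsChain (· ≤ ·) (μ.map fun ω i => X i ω).support := by
  set V : Ω → ι → ℝ := fun ω i => X i ω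
  have hV : Measurable V := measurable_pi_lambda _ hX
  have hclosed : IsClosed {q : (ι → ℝ) × (ι → ℝ) | q.1 ≤ q.2 ∨ q.2 ≤ q.1} :=
    (isClosed_le continuous_fst continuous_snd).union (isClosed_le continuous_snd continuous_fst)
  have hae : ∀ᵐ q ∂(μ.map V).prod (μ.map V), q.1 ≤ q.2 ∨ q.2 ≤ q.1 := by
    rw [Measure.map_prod_map _ _ hV hV,
      ae_map_iff (hV.prodMap hV).aemeasurable hclosed.measurableSet]
    filter_upwards [ae_all_iff.2 fun i => ae_all_iff.2 (h i)] with q hq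
    exact le_or_le_of_forall_sub_mul_sub_nonneg hq
  exact fun v hv w hw _ =>
    Measure.rel_of_ae_prod_of_mem_support (R := fun v w => v ≤ w ∨ w ≤ v) hclosed hae hv hw

theorem lipschitzWith_one_of_monotone_of_sum_eq_id {ι : Type*} [Fintype ι] {f : ι → ℝ → ℝ}
    (hf : ∀ i, Monotone (f i)) (hsum : ∀ x, ∑ i, f i x = x) (i : ι) :
    LipschitzWith 1 (f i) := by
  refine LipschitzWith.of_le_add fun x y => ?_
  rcases le_total x y with hxy | hyx
  · linarith [hf i hxy, dist_nonneg (x := x) (y := y)]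
  · have hincr : f i x - f i y ≤ ∑ j, (f j x - f j y) :=
      single_le_sum (fun j _ => sub_nonneg.2 (hf j hyx)) (mem_univ i)
    rw [sum_sub_distrib, hsum, hsum] at hincr
    linarith [Real.dist_eq x y, le_abs_self (x - y)]

/-- `g x = ⨅ q ∈ S, q.1 + (x - (q.1 + q.2))⁺` is the largest monotone 1-Lipschitz extension of
`q.1 + q.2 ↦ q.1`. -/
theorem exists_monotone_split_of_isChain {S : Set (ℝ × ℝ)} (hS : IsChain (· ≤ ·) S) :
    ∃ g : ℝ → ℝ, Monotone g ∧ Monotone (fun x => x - g x) ∧ ∀ q ∈ S, g (q.1 + q.2) = q.1 := by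
  rcases S.eq_empty_or_nonempty with rfl | ⟨q₀, hq₀⟩
  · exact ⟨0, monotone_const, fun x y h => by simpa using h, by simp⟩
  have : Nonempty S := ⟨⟨q₀, hq₀⟩⟩
  set φ : ℝ → ℝ × ℝ → ℝ := fun x q => q.1 + max 0 (x - (q.1 + q.2))
  have hbdd : ∀ x, BddBelow (Set.range fun q : S => φ x q) := by
    refine fun x => ⟨min q₀.1 (x - q₀.2), ?_⟩
    rintro _ ⟨⟨q, hq⟩, rfl⟩
    rcases hS.total hq₀ hq with ⟨h₁, h₂⟩ | ⟨h₁, h₂⟩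
    · linarith [min_le_left q₀.1 (x - q₀.2), le_max_left 0 (x - (q.1 + q.2))]
    · linarith [min_le_right q₀.1 (x - q₀.2), le_max_right 0 (x - (q.1 + q.2))]
  refine ⟨fun x => ⨅ q : S, φ x q, fun x y hxy => ?_, fun x y hxy => ?_, fun q hq => ?_⟩
  · refine le_ciInf fun q => (ciInf_le (hbdd x) q).trans ?_
    simp only [φ]
    gcongr
  · suffices (⨅ q : S, φ y q) - (y - x) ≤ ⨅ q : S, φ x q by linarith
    refine le_ciInf fun q => sub_le_iff_le_add.2 ((ciInf_le (hbdd y) q).trans ?_)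
    have : max 0 (y - (q.1.1 + q.1.2)) ≤ max 0 (x - (q.1.1 + q.1.2)) + (y - x) :=
      max_le (by linarith [le_max_left 0 (x - (q.1.1 + q.1.2))])
        (by linarith [le_max_right 0 (x - (q.1.1 + q.1.2))])
    simp only [φ]
    linarith
  · refine le_antisymm ((ciInf_le (hbdd _) ⟨q, hq⟩).trans (by simp [φ])) (le_ciInf ?_)
    rintro ⟨q', hq'⟩
    rcases hS.total hq hq' with ⟨h₁, h₂⟩ | ⟨h₁, h₂⟩
    · linarith [le_max_left 0 (q.1 + q.2 - (q'.1 + q'.2))]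
    · linarith [le_max_right 0 (q.1 + q.2 - (q'.1 + q'.2))]

theorem exists_monotone_decomposition_of_isChain :
    ∀ {n : ℕ} {T : Set (Fin (n + 1) → ℝ)}, IsChain (· ≤ ·) T →
      ∃ f : Fin (n + 1) → ℝ → ℝ, (∀ i, Monotone (f i)) ∧ (∀ x, ∑ i, f i x = x) ∧
        ∀ v ∈ T, ∀ i, f i (∑ j, v j) = v i
  | 0, _, _ => ⟨fun _ => id, fun _ => monotone_id, by simp, fun v _ i => by
      fin_cases i; simp⟩
  | n + 1, T, hT => by
    have hinit : Monotone (Fin.init : (Fin (n + 2) → ℝ) → Fin (n + 1) → ℝ) :=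
      fun v w h i => h _
    obtain ⟨K, hK, hKsum, hKT⟩ := exists_monotone_decomposition_of_isChain (hinit.isChain_image hT)
    have hsplit : Monotone fun v : Fin (n + 2) → ℝ => (∑ i, Fin.init v i, v (Fin.last _)) :=
      fun v w h => Prod.mk_le_mk.2 ⟨sum_le_sum fun i _ => hinit h i, h _⟩
    obtain ⟨g, hg, hg', hgT⟩ := exists_monotone_split_of_isChain (hsplit.isChain_image hT)
    have hsum_init : ∀ v : Fin (n + 2) → ℝ, ∑ j, v j = ∑ j, Fin.init v j + v (Fin.last _) :=
      fun v => Fin.sum_univ_castSucc v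
    refine ⟨Fin.snoc (α := fun _ => ℝ → ℝ) (fun i => K i ∘ g) (fun x => x - g x),
      fun i => ?_, fun x => ?_, fun v hv i => ?_⟩
    · induction i using Fin.lastCases with
      | last => simpa using hg'
      | cast i => simpa using (hK i).comp hg
    · simp [Fin.sum_univ_castSucc, hKsum]
    · have hgv : g (∑ j, v j) = ∑ j, Fin.init v j := by
        rw [hsum_init]; exact hgT _ ⟨v, hv, rfl⟩
      induction i using Fin.lastCases with
      | last =>
        simp only [Fin.snoc_last]
        rw [hgv, hsum_init v, add_sub_cancel_left]
      | cast i =>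
        simp only [Fin.snoc_castSucc, Function.comp_apply]
        rw [hgv]
        exact hKT _ ⟨v, hv, rfl⟩ i

/-- a family is comonotone iff each member is a nondecreasing
1-Lipschitz function of the sum, the functions summing to the identity. -/
theorem stmt8 {Ω : Type*} [MeasurableSpace Ω] (μ : Measure Ω) [IsProbabilityMeasure μ]
    {p : ℕ} (hp : 0 < p) (X : Fin p → Ω → ℝ) (hm : ∀ i, Measurable (X i)) :
    (∀ i j, Comonotone μ (X i) (X j)) ↔
    ∃ f : Fin p → ℝ → ℝ,
      (∀ i, Monotone (f i)) ∧ (∀ i, LipschitzWith 1 (f i)) ∧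
      (∀ x : ℝ, ∑ i, f i x = x) ∧
      (∀ i, X i =ᵐ[μ] fun ω => f i (∑ j, X j ω)) := by
  constructor
  · intro h
    obtain ⟨n, rfl⟩ := Nat.exists_eq_add_one_of_ne_zero hp.ne'
    obtain ⟨f, hmono, hsum, hval⟩ :=
      exists_monotone_decomposition_of_isChain (isChain_support_map_of_comonotone hm h)
    refine ⟨f, hmono, lipschitzWith_one_of_monotone_of_sum_eq_id hmono hsum, hsum, fun i => ?_⟩
    filter_upwards [ae_of_ae_map (measurable_pi_lambda _ hm).aemeasurable
      Measure.support_mem_ae] with ω hω using (hval _ hω i).symm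
  · rintro ⟨f, hmono, -, -, hX⟩ i j
    filter_upwards [Measure.quasiMeasurePreserving_fst.ae (hX i),
      Measure.quasiMeasurePreserving_snd.ae (hX i), Measure.quasiMeasurePreserving_fst.ae (hX j),
      Measure.quasiMeasurePreserving_snd.ae (hX j)] with q hi₁ hi₂ hj₁ hj₂
    rw [hi₁, hi₂, hj₁, hj₂]
    exact ((hmono i).monovary (hmono j)).sub_mul_sub_nonneg _ _
end

section
/- Let X be a bounded real random variable and (X₁,...,X_p) a comonotone allocation of X (Σᵢ Xᵢ = X, Xᵢ = fᵢ(X) with fᵢ nondecreasing 1-Lipschitz summing to the identity). Write φᵢ(x) := ∫₀^x fᵢ(s) ds and ψᵢ := φᵢ*, the Legendre transform of φᵢ. Then each ψᵢ is strictly convex and continuous, X ∈ ∂ψᵢ(Xᵢ) a.s. for every i, and (X₁,...,X_p) minimizes E[Σᵢ ψᵢ(Yᵢ)] over all allocations (Y₁,...,Y_p) with Σᵢ Yᵢ = X. -/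
/-!
Each `fᵢ` is the derivative of the convex primitive `φᵢ`, and the linear tails make `fᵢ`
surjective, so every slope `z` is attained as `z = fᵢ w` and the supremum defining `ψᵢ z` is
attained at `w` (in particular it is finite, so `sSup` never returns its junk value); hence `ψᵢ (fᵢ x) = x fᵢ x - φᵢ x`. Combined with the Fenchel–Young inequality
`z y - φᵢ y ≤ ψᵢ z` this gives the subgradient inequality `x ∈ ∂ψᵢ (fᵢ x)`. A maximiser `w` of
`y ↦ z y - φᵢ y` satisfies the first-order condition `z = fᵢ w`, so Fenchel–Young is strict whenever `z ≠ fᵢ w`, which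
yields strict convexity. Summing the subgradient inequalities at the common point `x`, the linear
terms cancel because both allocations sum to `x`; integrating gives optimality.
-/

open MeasureTheory

noncomputable def legendre (φ : ℝ → ℝ) (x : ℝ) : ℝ :=
  sSup (Set.range fun y => x * y - φ y)

open Filter Topology Set

noncomputable def primitive (f : ℝ → ℝ) (x : ℝ) : ℝ := ∫ s in (0:ℝ)..x, f s

section Primitive

variable {f : ℝ → ℝ}

theorem primitive_sub_primitive (hf : Continuous f) (a b : ℝ) :
    primitive f b - primitive f a = ∫ s in a..b, f s :=
  intervalIntegral.integral_interval_sub_left (hf.intervalIntegrable _ _)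
    (hf.intervalIntegrable _ _)

theorem hasDerivAt_primitive (hf : Continuous f) (x : ℝ) : HasDerivAt (primitive f) (f x) x :=
  (hf.integral_hasStrictDerivAt 0 x).hasDerivAt

theorem mul_sub_le_primitive_sub (hmono : Monotone f) (hf : Continuous f) (x y : ℝ) :
    f x * (y - x) ≤ primitive f y - primitive f x := by
  rw [primitive_sub_primitive hf]
  rcases le_total x y with hxy | hyx
  · have h : ∫ _ in x..y, f x ≤ ∫ s in x..y, f s :=
      intervalIntegral.integral_mono_on hxy intervalIntegrable_const
        (hf.intervalIntegrable x y) fun s hs => hmono hs.1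
    rwa [intervalIntegral.integral_const, smul_eq_mul, mul_comm] at h
  · have h : ∫ s in y..x, f s ≤ ∫ _ in y..x, f x :=
      intervalIntegral.integral_mono_on hyx (hf.intervalIntegrable y x)
        intervalIntegrable_const fun s hs => hmono hs.2
    rw [intervalIntegral.integral_const, smul_eq_mul] at h
    rw [intervalIntegral.integral_symm]
    linarith

theorem isGreatest_mul_sub_primitive (hmono : Monotone f) (hf : Continuous f) (x : ℝ) :
    IsGreatest (range fun y => f x * y - primitive f y) (f x * x - primitive f x) := by
  refine ⟨⟨x, rfl⟩, ?_⟩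
  rintro _ ⟨y, rfl⟩
  linarith [mul_sub_le_primitive_sub hmono hf x y]

theorem legendre_primitive_apply (hmono : Monotone f) (hf : Continuous f) (x : ℝ) :
    legendre (primitive f) (f x) = f x * x - primitive f x :=
  (isGreatest_mul_sub_primitive hmono hf x).csSup_eq

theorem mul_sub_primitive_le_legendre (hmono : Monotone f) (hf : Continuous f)
    (hsurj : Function.Surjective f) (z y : ℝ) :
    z * y - primitive f y ≤ legendre (primitive f) z := by
  obtain ⟨x, rfl⟩ := hsurj z
  exact le_csSup (isGreatest_mul_sub_primitive hmono hf x).bddAbove ⟨y, rfl⟩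

theorem eq_of_legendre_primitive_eq (hmono : Monotone f) (hf : Continuous f)
    (hsurj : Function.Surjective f) {z w : ℝ}
    (h : legendre (primitive f) z = z * w - primitive f w) : z = f w := by
  have hmax : IsMaxOn (fun y => z * y - primitive f y) univ w := fun y _ =>
    (mul_sub_primitive_le_legendre hmono hf hsurj z y).trans h.le
  have hderiv : HasDerivAt (fun y => z * y - primitive f y) (z * 1 - f w) w :=
    ((hasDerivAt_id w).const_mul z).sub (hasDerivAt_primitive hf w)
  linarith [(hmax.isLocalMax univ_mem).hasDerivAt_eq_zero hderiv]

theorem mul_sub_primitive_lt_legendre (hmono : Monotone f) (hf : Continuous f)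
    (hsurj : Function.Surjective f) {z w : ℝ} (hzw : z ≠ f w) :
    z * w - primitive f w < legendre (primitive f) z :=
  (mul_sub_primitive_le_legendre hmono hf hsurj z w).lt_of_ne fun h =>
    hzw (eq_of_legendre_primitive_eq hmono hf hsurj h.symm)

theorem strictConvexOn_legendre_primitive (hmono : Monotone f) (hf : Continuous f)
    (hsurj : Function.Surjective f) : StrictConvexOn ℝ univ (legendre (primitive f)) := by
  refine ⟨convex_univ, fun z₁ _ z₂ _ hne a b ha hb hab => ?_⟩
  obtain ⟨w, hw⟩ := hsurj (a • z₁ + b • z₂)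
  have h₁ : z₁ ≠ f w := by
    rw [hw, smul_eq_mul, smul_eq_mul]
    intro h
    exact hne (mul_left_cancel₀ hb.ne' (by linear_combination h + z₁ * hab))
  have h₂ : z₂ ≠ f w := by
    rw [hw, smul_eq_mul, smul_eq_mul]
    intro h
    exact hne (mul_left_cancel₀ ha.ne' (by linear_combination -h - z₂ * hab))
  have lt₁ := mul_lt_mul_of_pos_left (mul_sub_primitive_lt_legendre hmono hf hsurj h₁) ha
  have lt₂ := mul_lt_mul_of_pos_left (mul_sub_primitive_lt_legendre hmono hf hsurj h₂) hb
  rw [← hw, legendre_primitive_apply hmono hf, hw, smul_eq_mul, smul_eq_mul, smul_eq_mul,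
    smul_eq_mul]
  linear_combination lt₁ + lt₂ + primitive f w * hab

theorem continuous_legendre_primitive (hmono : Monotone f) (hf : Continuous f)
    (hsurj : Function.Surjective f) : Continuous (legendre (primitive f)) :=
  continuousOn_univ.mp
    ((strictConvexOn_legendre_primitive hmono hf hsurj).convexOn.continuousOn isOpen_univ)

theorem legendre_primitive_add_mul_sub_le (hmono : Monotone f) (hf : Continuous f)
    (hsurj : Function.Surjective f) (x y : ℝ) :
    legendre (primitive f) (f x) + x * (y - f x) ≤ legendre (primitive f) y := by
  rw [legendre_primitive_apply hmono hf]
  linarith [mul_sub_primitive_le_legendre hmono hf hsurj y x]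

theorem surjective_of_affine_tails (hf : Continuous f) {c m M : ℝ} (hc : 0 < c)
    (hM : ∀ x ≥ M, f x = f M + (x - M) / c) (hm : ∀ x ≤ m, f x = f m + (x - m) / c) :
    Function.Surjective f := by
  have htop : Tendsto f atTop atTop :=
    (tendsto_atTop_add_const_left _ _ ((tendsto_atTop_add_const_right _ (-M)
      tendsto_id).atTop_div_const hc)).congr'
      ((eventually_ge_atTop M).mono fun x hx => (hM x hx).symm)
  have hbot : Tendsto f atBot atBot :=
    (tendsto_atBot_add_const_left _ _ ((tendsto_atBot_add_const_right _ (-m)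
      tendsto_id).atBot_div_const hc)).congr'
      ((eventually_le_atBot m).mono fun x hx => (hm x hx).symm)
  exact hf.surjective htop hbot

end Primitive

theorem sum_legendre_primitive_le {ι : Type*} [Fintype ι] {f : ι → ℝ → ℝ}
    (hmono : ∀ i, Monotone (f i)) (hf : ∀ i, Continuous (f i))
    (hsurj : ∀ i, Function.Surjective (f i)) {x : ℝ} (hfx : ∑ i, f i x = x) {y : ι → ℝ}
    (hy : ∑ i, y i = x) :
    ∑ i, legendre (primitive (f i)) (f i x) ≤ ∑ i, legendre (primitive (f i)) (y i) := by
  have h := Finset.sum_le_sum fun i (_ : i ∈ Finset.univ) =>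
    legendre_primitive_add_mul_sub_le (hmono i) (hf i) (hsurj i) x (y i)
  rwa [Finset.sum_add_distrib, ← Finset.mul_sum, Finset.sum_sub_distrib, hfx, hy, sub_self,
    mul_zero, add_zero] at h

theorem Continuous.integrable_comp_of_mem_isCompact {Ω : Type*} [MeasurableSpace Ω]
    {μ : Measure Ω} [IsFiniteMeasure μ] {g : ℝ → ℝ} (hg : Continuous g) {Y : Ω → ℝ}
    (hY : Measurable Y) {K : Set ℝ} (hK : IsCompact K) (hYK : ∀ ω, Y ω ∈ K) :
    Integrable (fun ω => g (Y ω)) μ := by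
  obtain ⟨C, hC⟩ := hK.exists_bound_of_continuousOn hg.continuousOn
  exact Integrable.of_bound (hg.measurable.comp hY).aestronglyMeasurable C
    (ae_of_all _ fun ω => hC _ (hYK ω))

theorem stmt10_general {Ω : Type*} [MeasurableSpace Ω] (μ : Measure Ω) [IsProbabilityMeasure μ]
    {p : ℕ} (hp : 0 < p) (X : Ω → ℝ) (hXm : Measurable X)
    (m M : ℝ) (hX : ∀ ω, X ω ∈ Set.Icc m M)
    (f : Fin p → ℝ → ℝ)
    (hmono : ∀ i, Monotone (f i)) (hlip : ∀ i, LipschitzWith 1 (f i))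
    (hsum : ∀ x : ℝ, ∑ i, f i x = x)
    (hextM : ∀ i, ∀ x ≥ M, f i x = f i M + (x - M) / p)
    (hextm : ∀ i, ∀ x ≤ m, f i x = f i m + (x - m) / p) :
    (∀ i, StrictConvexOn ℝ Set.univ (legendre (fun x => ∫ s in (0:ℝ)..x, f i s)) ∧
      Continuous (legendre (fun x => ∫ s in (0:ℝ)..x, f i s))) ∧
    (∀ i, ∀ᵐ ω ∂μ, ∀ y : ℝ,
      legendre (fun x => ∫ s in (0:ℝ)..x, f i s) (f i (X ω))
          + X ω * (y - f i (X ω))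
        ≤ legendre (fun x => ∫ s in (0:ℝ)..x, f i s) y) ∧
    (∀ Y : Fin p → Ω → ℝ, (∀ i, Measurable (Y i)) → (∀ i, ∃ C, ∀ ω, |Y i ω| ≤ C) →
      (∀ ω, ∑ i, Y i ω = X ω) →
      ∫ ω, ∑ i, legendre (fun x => ∫ s in (0:ℝ)..x, f i s) (f i (X ω)) ∂μ
        ≤ ∫ ω, ∑ i, legendre (fun x => ∫ s in (0:ℝ)..x, f i s) (Y i ω) ∂μ) := by
  have hf : ∀ i, Continuous (f i) := fun i => (hlip i).continuous
  have hsurj : ∀ i, Function.Surjective (f i) := fun i =>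
    surjective_of_affine_tails (hf i) (Nat.cast_pos.mpr hp) (hextM i) (hextm i)
  have hψ : ∀ i, Continuous (legendre (primitive (f i))) := fun i =>
    continuous_legendre_primitive (hmono i) (hf i) (hsurj i)
  refine ⟨fun i => ⟨strictConvexOn_legendre_primitive (hmono i) (hf i) (hsurj i), hψ i⟩,
    fun i => ae_of_all _ fun ω => legendre_primitive_add_mul_sub_le (hmono i) (hf i) (hsurj i) _,
    fun Y hYm hYb hYsum => integral_mono ?_ ?_ fun ω =>
      sum_legendre_primitive_le hmono hf hsurj (hsum (X ω)) (hYsum ω)⟩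
  · exact integrable_finsetSum _ fun i _ =>
      ((hψ i).comp (hf i)).integrable_comp_of_mem_isCompact hXm isCompact_Icc hX
  · refine integrable_finsetSum _ fun i _ => ?_
    obtain ⟨C, hC⟩ := hYb i
    exact (hψ i).integrable_comp_of_mem_isCompact (hYm i) (isCompact_Icc (a := -C) (b := C))
      fun ω => abs_le.mp (hC ω)

/-- from a comonotone allocation X_i = f_i(X), setting
φ_i(x) = ∫₀ˣ f_i and ψ_i = φ_i*, the ψ_i are strictly convex and continuous,
X ∈ ∂ψ_i(X_i) a.s., and (X_1,...,X_p) minimizes E[Σ ψ_i(Y_i)] over allocations. -/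
theorem stmt10 {Ω : Type*} [MeasurableSpace Ω] (μ : Measure Ω) [IsProbabilityMeasure μ]
    {p : ℕ} (hp : 0 < p) (X : Ω → ℝ) (hXm : Measurable X)
    (m M : ℝ) (hmM : m ≤ M) (hX : ∀ ω, X ω ∈ Set.Icc m M)
    (f : Fin p → ℝ → ℝ)
    (hmono : ∀ i, Monotone (f i)) (hlip : ∀ i, LipschitzWith 1 (f i))
    (hsum : ∀ x : ℝ, ∑ i, f i x = x)
    (hextM : ∀ i, ∀ x ≥ M, f i x = f i M + (x - M) / p)
    (hextm : ∀ i, ∀ x ≤ m, f i x = f i m + (x - m) / p) :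
    (∀ i, StrictConvexOn ℝ Set.univ (legendre (fun x => ∫ s in (0:ℝ)..x, f i s)) ∧
      Continuous (legendre (fun x => ∫ s in (0:ℝ)..x, f i s))) ∧
    (∀ i, ∀ᵐ ω ∂μ, ∀ y : ℝ,
      legendre (fun x => ∫ s in (0:ℝ)..x, f i s) (f i (X ω))
          + X ω * (y - f i (X ω))
        ≤ legendre (fun x => ∫ s in (0:ℝ)..x, f i s) y) ∧
    (∀ Y : Fin p → Ω → ℝ, (∀ i, Measurable (Y i)) → (∀ i, ∃ C, ∀ ω, |Y i ω| ≤ C) →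
      (∀ ω, ∑ i, Y i ω = X ω) →
      ∫ ω, ∑ i, legendre (fun x => ∫ s in (0:ℝ)..x, f i s) (f i (X ω)) ∂μ
        ≤ ∫ ω, ∑ i, legendre (fun x => ∫ s in (0:ℝ)..x, f i s) (Y i ω) ∂μ) :=
  stmt10_general μ hp X hXm m M hX f hmono hlip hsum hextM hextm
end

section
/- Let ψ₁,...,ψ_p be continuous strictly convex functions on R^d, X a bounded R^d-valued random vector, and suppose the allocation (X₁,...,X_p) with Σᵢ Xᵢ = X satisfies E[Σᵢ ψᵢ(Xᵢ)] ≤ E[Σᵢ ψᵢ(Yᵢ)] for every allocation (Y₁,...,Y_p) of X. Then (X₁,...,X_p) is Pareto efficient for the concave order: no allocation of X strictly dominates it. -/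
/-!
Let `Ψ(y) = ∑ᵢ ψᵢ(yᵢ)` be the total cost. If an allocation `Y` dominated `(Xᵢ)`, then testing the
dominance against the convex `ψᵢ` shows that `Y` is a minimizer too. By strict convexity of `Ψ`,
the midpoint allocation `(X + Y)/2` would cost strictly less than the minimum unless `Y = X`
almost surely; and then no convex `φ` can separate `Yᵢ` from `Xᵢ`.
-/

open MeasureTheory

/-- Concave-order dominance for R^d-valued random vectors. -/
def ConcaveDom {Ω : Type*} [MeasurableSpace Ω] (μ : Measure Ω) {d : ℕ}
    (X Y : Ω → (Fin d → ℝ)) : Prop :=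
  ∀ φ : (Fin d → ℝ) → ℝ, ConvexOn ℝ Set.univ φ →
    ∫ ω, φ (X ω) ∂μ ≤ ∫ ω, φ (Y ω) ∂μ

/-- An allocation of X among p agents: bounded measurable vectors summing to X. -/
def IsAlloc {Ω : Type*} [MeasurableSpace Ω] {d p : ℕ}
    (X : Ω → (Fin d → ℝ)) (Y : Fin p → Ω → (Fin d → ℝ)) : Prop :=
  (∀ i, Measurable (Y i)) ∧ (∀ i, ∃ C, ∀ ω, ‖Y i ω‖ ≤ C) ∧
    ∀ ω, ∑ i, Y i ω = X ω

theorem strictConvexOn_univ_sum_apply {ι E : Type*} [Fintype ι] [AddCommGroup E] [Module ℝ E]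
    {f : ι → E → ℝ} (hf : ∀ i, StrictConvexOn ℝ Set.univ (f i)) :
    StrictConvexOn ℝ Set.univ (fun x : ι → E => ∑ i, f i (x i)) := by
  refine ⟨convex_univ, fun x _ y _ hxy a b ha hb hab => ?_⟩
  obtain ⟨j, hj⟩ := Function.ne_iff.mp hxy
  calc ∑ i, f i ((a • x + b • y) i)
      < ∑ i, (a • f i (x i) + b • f i (y i)) :=
        Finset.sum_lt_sum
          (fun i _ => (hf i).convexOn.2 trivial trivial ha.le hb.le hab)
          ⟨j, Finset.mem_univ j, (hf j).2 trivial trivial hj ha hb hab⟩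
    _ = a • ∑ i, f i (x i) + b • ∑ i, f i (y i) := by
        simp only [Finset.sum_add_distrib, Finset.smul_sum]

theorem integrable_comp_of_bounded {Ω E : Type*} [MeasurableSpace Ω] {μ : Measure Ω}
    [IsFiniteMeasure μ] [NormedAddCommGroup E] [ProperSpace E] [MeasurableSpace E]
    [OpensMeasurableSpace E] {ψ : E → ℝ} (hψ : Continuous ψ) {W : Ω → E} (hWm : Measurable W)
    {C : ℝ} (hWC : ∀ ω, ‖W ω‖ ≤ C) :
    Integrable (fun ω => ψ (W ω)) μ := by
  obtain ⟨M, hM⟩ :=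
    (isCompact_closedBall (0 : E) C).exists_bound_of_continuousOn hψ.continuousOn
  exact .of_bound (hψ.measurable.comp hWm).aestronglyMeasurable M
    (.of_forall fun ω => hM _ (mem_closedBall_zero_iff.mpr (hWC ω)))

theorem StrictConvexOn.ae_eq_of_integral_le_integral_midpoint {Ω F : Type*} [MeasurableSpace Ω]
    {μ : Measure Ω} [AddCommGroup F] [Module ℝ F] {Ψ : F → ℝ}
    (hΨ : StrictConvexOn ℝ Set.univ Ψ) {U V : Ω → F}
    (hU : Integrable (fun ω => Ψ (U ω)) μ) (hV : Integrable (fun ω => Ψ (V ω)) μ)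
    (hM : Integrable (fun ω => Ψ ((2⁻¹ : ℝ) • U ω + (2⁻¹ : ℝ) • V ω)) μ)
    (hVU : ∫ ω, Ψ (V ω) ∂μ ≤ ∫ ω, Ψ (U ω) ∂μ)
    (hUM : ∫ ω, Ψ (U ω) ∂μ ≤ ∫ ω, Ψ ((2⁻¹ : ℝ) • U ω + (2⁻¹ : ℝ) • V ω) ∂μ) :
    U =ᵐ[μ] V := by
  have hhalf : (2⁻¹ : ℝ) + 2⁻¹ = 1 := by norm_num
  set R := fun ω => 2⁻¹ * Ψ (U ω) + 2⁻¹ * Ψ (V ω)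
  have hR : Integrable R μ := (hU.const_mul _).add (hV.const_mul _)
  have hjensen : ∀ ω, Ψ ((2⁻¹ : ℝ) • U ω + (2⁻¹ : ℝ) • V ω) ≤ R ω := fun ω =>
    hΨ.convexOn.2 trivial trivial (by norm_num) (by norm_num) hhalf
  have hRM : ∫ ω, R ω ∂μ ≤ ∫ ω, Ψ ((2⁻¹ : ℝ) • U ω + (2⁻¹ : ℝ) • V ω) ∂μ := by
    rw [integral_add (hU.const_mul _) (hV.const_mul _), integral_const_mul, integral_const_mul]
    linarith
  have hae : (fun ω => Ψ ((2⁻¹ : ℝ) • U ω + (2⁻¹ : ℝ) • V ω)) =ᵐ[μ] R :=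
    (integral_eq_iff_of_ae_le hM hR (.of_forall hjensen)).mp
      (le_antisymm (integral_mono hM hR hjensen) hRM)
  filter_upwards [hae] with ω hω
  by_contra hne
  exact (hΨ.2 trivial trivial hne (by norm_num) (by norm_num) hhalf).ne hω

namespace IsAlloc

variable {Ω : Type*} [MeasurableSpace Ω] {d p : ℕ} {X : Ω → (Fin d → ℝ)}
  {Y Z : Fin p → Ω → (Fin d → ℝ)}

theorem smul_add_smul (hY : IsAlloc X Y) (hZ : IsAlloc X Z) {a b : ℝ} (hab : a + b = 1) :
    IsAlloc X (fun i ω => a • Y i ω + b • Z i ω) := by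
  obtain ⟨hYm, hYb, hYs⟩ := hY
  obtain ⟨hZm, hZb, hZs⟩ := hZ
  refine ⟨fun i => ((hYm i).const_smul a).add ((hZm i).const_smul b), fun i => ?_, fun ω => ?_⟩
  · obtain ⟨C₁, hC₁⟩ := hYb i
    obtain ⟨C₂, hC₂⟩ := hZb i
    refine ⟨‖a‖ * C₁ + ‖b‖ * C₂, fun ω => ?_⟩
    calc ‖a • Y i ω + b • Z i ω‖ ≤ ‖a‖ * ‖Y i ω‖ + ‖b‖ * ‖Z i ω‖ := by
          simpa only [norm_smul] using norm_add_le (a • Y i ω) (b • Z i ω)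
      _ ≤ ‖a‖ * C₁ + ‖b‖ * C₂ := by gcongr; exacts [hC₁ ω, hC₂ ω]
  · rw [Finset.sum_add_distrib, ← Finset.smul_sum, ← Finset.smul_sum, hYs, hZs, ← add_smul, hab,
      one_smul]

theorem integrable_comp (hY : IsAlloc X Y) (μ : Measure Ω) [IsFiniteMeasure μ]
    {ψ : (Fin d → ℝ) → ℝ} (hψ : Continuous ψ) (i : Fin p) :
    Integrable (fun ω => ψ (Y i ω)) μ :=
  integrable_comp_of_bounded hψ (hY.1 i) (hY.2.1 i).choose_spec

theorem integrable_sum_comp (hY : IsAlloc X Y) (μ : Measure Ω) [IsFiniteMeasure μ]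
    {ψ : Fin p → (Fin d → ℝ) → ℝ} (hψ : ∀ i, Continuous (ψ i)) :
    Integrable (fun ω => ∑ i, ψ i (Y i ω)) μ :=
  integrable_finsetSum _ fun i _ => hY.integrable_comp μ (hψ i) i

theorem integral_sum_le_of_concaveDom (hY : IsAlloc X Y) (hZ : IsAlloc X Z) {μ : Measure Ω}
    [IsFiniteMeasure μ] {ψ : Fin p → (Fin d → ℝ) → ℝ} (hψc : ∀ i, Continuous (ψ i))
    (hψ : ∀ i, ConvexOn ℝ Set.univ (ψ i)) (hdom : ∀ i, ConcaveDom μ (Y i) (Z i)) :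
    ∫ ω, ∑ i, ψ i (Y i ω) ∂μ ≤ ∫ ω, ∑ i, ψ i (Z i ω) ∂μ := by
  rw [integral_finsetSum _ fun i _ => hY.integrable_comp μ (hψc i) i,
    integral_finsetSum _ fun i _ => hZ.integrable_comp μ (hψc i) i]
  exact Finset.sum_le_sum fun i _ => hdom i (ψ i) (hψ i)

end IsAlloc

theorem stmt11_general {Ω : Type*} [MeasurableSpace Ω] (μ : Measure Ω) [IsProbabilityMeasure μ]
    {d p : ℕ} (ψ : Fin p → (Fin d → ℝ) → ℝ)
    (hψc : ∀ i, Continuous (ψ i)) (hψs : ∀ i, StrictConvexOn ℝ Set.univ (ψ i))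
    (X : Ω → (Fin d → ℝ))
    (Xi : Fin p → Ω → (Fin d → ℝ)) (hXi : IsAlloc X Xi)
    (hmin : ∀ Y : Fin p → Ω → (Fin d → ℝ), IsAlloc X Y →
      ∫ ω, ∑ i, ψ i (Xi i ω) ∂μ ≤ ∫ ω, ∑ i, ψ i (Y i ω) ∂μ) :
    ¬ ∃ Y : Fin p → Ω → (Fin d → ℝ), IsAlloc X Y ∧
        (∀ i, ConcaveDom μ (Y i) (Xi i)) ∧
        ∃ i, ∃ φ : (Fin d → ℝ) → ℝ, ConvexOn ℝ Set.univ φ ∧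
          ∫ ω, φ (Y i ω) ∂μ < ∫ ω, φ (Xi i ω) ∂μ := by
  rintro ⟨Y, hY, hdom, i, φ, -, hlt⟩
  have hmid := hXi.smul_add_smul hY (a := 2⁻¹) (b := 2⁻¹) (by norm_num)
  have hXY : (fun ω j => Xi j ω) =ᵐ[μ] fun ω j => Y j ω :=
    (strictConvexOn_univ_sum_apply hψs).ae_eq_of_integral_le_integral_midpoint
      (hXi.integrable_sum_comp μ hψc) (hY.integrable_sum_comp μ hψc)
      (hmid.integrable_sum_comp μ hψc)
      (hY.integral_sum_le_of_concaveDom hXi hψc (fun j => (hψs j).convexOn) hdom)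
      (hmin _ hmid)
  have hXYi : Xi i =ᵐ[μ] Y i := hXY.mono fun ω h => congrFun h i
  exact hlt.ne (integral_congr_ae (hXYi.fun_comp φ).symm)

/-- a minimizer of a strictly convex expected-cost risk-sharing
problem is Pareto efficient for the concave order. -/
theorem stmt11 {Ω : Type*} [MeasurableSpace Ω] (μ : Measure Ω) [IsProbabilityMeasure μ]
    {d p : ℕ} (ψ : Fin p → (Fin d → ℝ) → ℝ)
    (hψc : ∀ i, Continuous (ψ i)) (hψs : ∀ i, StrictConvexOn ℝ Set.univ (ψ i))
    (X : Ω → (Fin d → ℝ)) (hXm : Measurable X) (hXb : ∃ C, ∀ ω, ‖X ω‖ ≤ C)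
    (Xi : Fin p → Ω → (Fin d → ℝ)) (hXi : IsAlloc X Xi)
    (hmin : ∀ Y : Fin p → Ω → (Fin d → ℝ), IsAlloc X Y →
      ∫ ω, ∑ i, ψ i (Xi i ω) ∂μ ≤ ∫ ω, ∑ i, ψ i (Y i ω) ∂μ) :
    ¬ ∃ Y : Fin p → Ω → (Fin d → ℝ), IsAlloc X Y ∧
        (∀ i, ConcaveDom μ (Y i) (Xi i)) ∧
        ∃ i, ∃ φ : (Fin d → ℝ) → ℝ, ConvexOn ℝ Set.univ φ ∧
          ∫ ω, φ (Y i ω) ∂μ < ∫ ω, φ (Xi i ω) ∂μ :=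
  stmt11_general μ ψ hψc hψs X Xi hXi hmin
end

section
/- Let K be the set of pairs of 2×2 real matrices (S₁(S₁+S₂)^{-1}, S₂(S₁+S₂)^{-1}) where S₁, S₂ range over symmetric positive definite 2×2 matrices. Then K is not convex. Specifically, with S₁ = [[1, √(1−ε)],[√(1−ε), 1]], S₂ = [[1, −√(1−ε)],[−√(1−ε), 1]], S₁' = [[1, √(n−ε)],[√(n−ε), n]], S₂' = [[1, −√(n−ε)],[−√(n−ε), n]], and Mᵢ = Sᵢ(S₁+S₂)^{-1}, Mᵢ' = Sᵢ'(S₁'+S₂')^{-1}, the matrix M₁ + M₁' has negative determinant for n large and ε small, whereas every first component of an element of K has positive determinant. -/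
open Matrix

/-- The set of pairs (S₁(S₁+S₂)⁻¹, S₂(S₁+S₂)⁻¹) with S₁, S₂ symmetric positive
definite 2×2 real matrices. -/
def Kset : Set (Matrix (Fin 2) (Fin 2) ℝ × Matrix (Fin 2) (Fin 2) ℝ) :=
  {P | ∃ S₁ S₂ : Matrix (Fin 2) (Fin 2) ℝ, S₁.PosDef ∧ S₂.PosDef ∧
    P = (S₁ * (S₁ + S₂)⁻¹, S₂ * (S₁ + S₂)⁻¹)}

/-!
Since `det (S₁ (S₁ + S₂)⁻¹) = det S₁ / det (S₁ + S₂) > 0`, two points of `K` whose first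
components sum to a matrix of negative determinant have a midpoint outside `K`. For the
reflected pair `S₁ = [[1, b], [b, d]]`, `S₂ = [[1, -b], [-b, d]]` the sum is `diag (2, 2d)`,
hence `S₁ (S₁ + S₂)⁻¹ = [[1/2, b/(2d)], [b/2, 1/2]]`: the two off-diagonal entries scale
differently with `d`. Taking `(b, d) = (4/5, 1)` and `(21/5, 18)`, i.e. `ε = 9/25` and
`n = 18`, where both square roots are rational, the sum of the two first components has
determinant `-7/24`.
-/

lemma det_mul_inv_add_pos {n : Type*} [Fintype n] [DecidableEq n] {S₁ S₂ : Matrix n n ℝ}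
    (h₁ : S₁.PosDef) (h₂ : S₂.PosDef) : 0 < (S₁ * (S₁ + S₂)⁻¹).det := by
  rw [det_mul, det_nonsing_inv, Ring.inverse_eq_inv']
  exact mul_pos h₁.det_pos (inv_pos.2 (h₁.add h₂).det_pos)

lemma det_fst_pos_of_mem_Kset {P : Matrix (Fin 2) (Fin 2) ℝ × Matrix (Fin 2) (Fin 2) ℝ}
    (hP : P ∈ Kset) : 0 < P.1.det := by
  obtain ⟨S₁, S₂, h₁, h₂, rfl⟩ := hP
  exact det_mul_inv_add_pos h₁ h₂

lemma not_convex_Kset_of_det_fst_add_neg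
    {P Q : Matrix (Fin 2) (Fin 2) ℝ × Matrix (Fin 2) (Fin 2) ℝ} (hP : P ∈ Kset) (hQ : Q ∈ Kset)
    (h : (P.1 + Q.1).det < 0) : ¬ Convex ℝ Kset := by
  intro hconv
  have hmid := det_fst_pos_of_mem_Kset
    (hconv hP hQ (by norm_num : (0 : ℝ) ≤ 1 / 2) (by norm_num : (0 : ℝ) ≤ 1 / 2)
      (by norm_num))
  rw [Prod.fst_add, Prod.smul_fst, Prod.smul_fst, ← smul_add, det_smul, Fintype.card_fin]
    at hmid
  linarith

/-- `[[1, b], [b, d]] = Uᴴ diag (1, d - b²) U` with `U = [[1, b], [0, 1]]`. -/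
lemma posDef_fin_two_of_sq_lt {b d : ℝ} (h : b ^ 2 < d) : !![1, b; b, d].PosDef := by
  have hU : Function.Injective !![(1 : ℝ), b; 0, 1].mulVec :=
    mulVec_injective_iff_isUnit.mpr (by simp [isUnit_iff_isUnit_det, det_fin_two_of])
  have hD : (diagonal ![(1 : ℝ), d - b ^ 2]).PosDef :=
    .diagonal fun i => by fin_cases i <;> simp [h]
  convert hD.conjTranspose_mul_mul_same hU using 1
  ext i j
  fin_cases i <;> fin_cases j <;> simp [mul_apply, Fin.sum_univ_two]
  ring

lemma fin_two_mul_inv_add_neg_offDiag (b : ℝ) {d : ℝ} (hd : d ≠ 0) :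
    !![1, b; b, d] * (!![1, b; b, d] + !![1, -b; -b, d])⁻¹ =
      !![1 / 2, b / (2 * d); b / 2, 1 / 2] := by
  have hsum : !![1, b; b, d] + !![1, -b; -b, d] = !![2, 0; 0, 2 * d] := by
    rw [of_add_of]
    congr
    norm_num [two_mul]
  have hinv : !![2, 0; 0, 2 * d]⁻¹ = !![1 / 2, 0; 0, 1 / (2 * d)] :=
    inv_eq_right_inv (by simp [one_fin_two]; field_simp)
  rw [hsum, hinv, mul_fin_two]
  congr <;> field_simp <;> ring

lemma mem_Kset_of_sq_lt {b d : ℝ} (h : b ^ 2 < d) :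
    (!![1, b; b, d] * (!![1, b; b, d] + !![1, -b; -b, d])⁻¹,
      !![1, -b; -b, d] * (!![1, b; b, d] + !![1, -b; -b, d])⁻¹) ∈ Kset :=
  ⟨_, _, posDef_fin_two_of_sq_lt h, posDef_fin_two_of_sq_lt (by rwa [neg_sq]), rfl⟩

lemma det_fst_add_fst_neg :
    (!![1, 4 / 5; 4 / 5, 1] * (!![1, 4 / 5; 4 / 5, 1] + !![1, -(4 / 5); -(4 / 5), 1])⁻¹ +
      !![1, 21 / 5; 21 / 5, 18] *
        (!![1, 21 / 5; 21 / 5, 18] + !![1, -(21 / 5); -(21 / 5), 18])⁻¹ :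
        Matrix (Fin 2) (Fin 2) ℝ).det < 0 := by
  rw [fin_two_mul_inv_add_neg_offDiag _ one_ne_zero,
    fin_two_mul_inv_add_neg_offDiag _ (by norm_num : (18 : ℝ) ≠ 0), det_fin_two]
  norm_num

lemma not_convex_Kset : ¬ Convex ℝ Kset :=
  not_convex_Kset_of_det_fst_add_neg (mem_Kset_of_sq_lt (by norm_num))
    (mem_Kset_of_sq_lt (by norm_num)) det_fst_add_fst_neg

/-- K is not convex; every first component of an element of K has
positive determinant, while for the explicit family above, M₁ + M₁' has
negative determinant for n large and ε small. -/
theorem stmt18 :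
    (∀ P ∈ Kset, 0 < P.1.det) ∧
    ¬ Convex ℝ Kset ∧
    ∃ (n : ℕ) (ε : ℝ), 0 < ε ∧ ε < 1 ∧
      ((!![(1:ℝ), Real.sqrt (1 - ε); Real.sqrt (1 - ε), 1] *
          (!![(1:ℝ), Real.sqrt (1 - ε); Real.sqrt (1 - ε), 1] +
           !![(1:ℝ), -Real.sqrt (1 - ε); -Real.sqrt (1 - ε), 1])⁻¹ +
        !![(1:ℝ), Real.sqrt (n - ε); Real.sqrt (n - ε), (n : ℝ)] *
          (!![(1:ℝ), Real.sqrt (n - ε); Real.sqrt (n - ε), (n : ℝ)] +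
           !![(1:ℝ), -Real.sqrt (n - ε); -Real.sqrt (n - ε), (n : ℝ)])⁻¹).det < 0) := by
  refine ⟨fun P => det_fst_pos_of_mem_Kset, not_convex_Kset, 18, 9 / 25, by norm_num,
    by norm_num, ?_⟩
  have ha : Real.sqrt (1 - 9 / 25) = 4 / 5 := by
    rw [Real.sqrt_eq_iff_eq_sq] <;> norm_num
  have hb : Real.sqrt ((18 : ℕ) - 9 / 25) = 21 / 5 := by
    rw [Real.sqrt_eq_iff_eq_sq] <;> norm_num
  rw [ha, hb, Nat.cast_ofNat]
  exact det_fst_add_fst_neg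
end

section
/- The family of linear maps of the form S₁(S₁+S₂)^{-1} with S₁, S₂ symmetric positive definite 2×2 matrices is unbounded: for each n ≥ 1, taking S₁ = [[1/2, 1/(8√n)],[1/(8√n), 1/(2n)]] and S₂ = [[1/2, −1/(8√n)],[−1/(8√n), 1/(2n)]] yields S₁(S₁+S₂)^{-1} = [[1/2, √n/8],[1/(8√n), 1/2]], whose operator norm tends to infinity as n → ∞. -/
/-! Since `S₁ + S₂ = diag(1, 1/n)`, multiplying `S₁` by its inverse scales the second column of
`S₁` by `n`; the resulting `(0, 1)` entry `√n / 8` bounds the operator norm from below. Positive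
definiteness of a symmetric `2 × 2` matrix follows by completing the square. -/

open Matrix Filter

attribute [local instance] Matrix.linftyOpNormedAddCommGroup

noncomputable def S1 (n : ℕ) : Matrix (Fin 2) (Fin 2) ℝ :=
  !![(1:ℝ)/2, 1/(8 * Real.sqrt n); 1/(8 * Real.sqrt n), 1/(2 * n)]

noncomputable def S2 (n : ℕ) : Matrix (Fin 2) (Fin 2) ℝ :=
  !![(1:ℝ)/2, -(1/(8 * Real.sqrt n)); -(1/(8 * Real.sqrt n)), 1/(2 * n)]

theorem Matrix.posDef_fin_two_of_sq_lt {R : Type*} [Field R] [LinearOrder R]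
    [IsStrictOrderedRing R] [StarRing R] [TrivialStar R] {a b c : R}
    (ha : 0 < a) (hb : b ^ 2 < a * c) :
    (!![a, b; b, c] : Matrix (Fin 2) (Fin 2) R).PosDef := by
  refine posDef_iff_dotProduct_mulVec.2 ⟨?_, fun x hx => ?_⟩
  · ext i j
    fin_cases i <;> fin_cases j <;> simp
  have hsq : a * (star x ⬝ᵥ (!![a, b; b, c] *ᵥ x)) =
      (a * x 0 + b * x 1) ^ 2 + (a * c - b ^ 2) * x 1 ^ 2 := by
    simp only [dotProduct, Pi.star_apply, star_trivial, mulVec, of_apply, cons_val',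
      cons_val_fin_one, Fin.sum_univ_two, Fin.isValue, cons_val_zero, cons_val_one]
    ring
  refine pos_of_mul_pos_right (hsq ▸ ?_) ha.le
  rcases eq_or_ne (x 1) 0 with hx₁ | hx₁
  · have hx₀ : x 0 ≠ 0 := fun hx₀ => hx (by ext i; fin_cases i <;> assumption)
    simp only [hx₁, mul_zero, add_zero, ne_eq, OfNat.ofNat_ne_zero, not_false_eq_true, zero_pow]
    positivity
  · have := mul_pos (sub_pos.2 hb) (sq_pos_of_ne_zero hx₁)
    positivity

theorem Matrix.norm_entry_le_linfty_opNorm {m n α : Type*} [Fintype m] [Fintype n]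
    [NormedAddCommGroup α] (A : Matrix m n α) (i : m) (j : n) : ‖A i j‖ ≤ ‖A‖ := by
  rw [linfty_opNorm_def]
  exact_mod_cast (Finset.single_le_sum (f := fun k => ‖A i k‖₊) (fun _ _ => zero_le)
    (Finset.mem_univ j)).trans (Finset.le_sup (f := fun i => ∑ k, ‖A i k‖₊) (Finset.mem_univ i))

lemma sq_one_div_eight_mul_sqrt_lt {n : ℕ} (hn : 1 ≤ n) :
    (1 / (8 * Real.sqrt n)) ^ 2 < 1 / 2 * (1 / (2 * n)) := by
  have hn_pos : (0 : ℝ) < n := by exact_mod_cast hn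
  rw [div_pow, mul_pow, Real.sq_sqrt hn_pos.le]
  field_simp
  linarith

lemma S1_posDef {n : ℕ} (hn : 1 ≤ n) : (S1 n).PosDef :=
  posDef_fin_two_of_sq_lt one_half_pos (sq_one_div_eight_mul_sqrt_lt hn)

lemma S2_posDef {n : ℕ} (hn : 1 ≤ n) : (S2 n).PosDef :=
  posDef_fin_two_of_sq_lt one_half_pos ((neg_sq _).trans_lt (sq_one_div_eight_mul_sqrt_lt hn))

lemma S1_add_S2 (n : ℕ) : S1 n + S2 n = diagonal ![1, (n : ℝ)⁻¹] := by
  ext i j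
  fin_cases i <;> fin_cases j <;> simp [S1, S2] <;> ring

lemma S1_mul_inv_S1_add_S2 {n : ℕ} (hn : 1 ≤ n) :
    S1 n * (S1 n + S2 n)⁻¹ = !![(1:ℝ)/2, Real.sqrt n / 8; 1/(8 * Real.sqrt n), 1/2] := by
  have hn_pos : (0 : ℝ) < n := by exact_mod_cast hn
  have hinv : (S1 n + S2 n)⁻¹ = diagonal ![1, (n : ℝ)] := by
    refine inv_eq_right_inv ?_
    rw [S1_add_S2, diagonal_mul_diagonal, ← diagonal_one]
    congr 1
    ext i
    fin_cases i <;> simp [hn_pos.ne']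
  rw [hinv]
  ext i j
  fin_cases i <;> fin_cases j <;> simp [S1]
  · have hs : 0 < Real.sqrt n := Real.sqrt_pos.2 hn_pos
    field_simp
    exact (Real.sq_sqrt hn_pos.le).symm
  · field_simp

lemma sqrt_div_eight_le_norm_S1_mul_inv_S1_add_S2 {n : ℕ} (hn : 1 ≤ n) :
    Real.sqrt n / 8 ≤ ‖S1 n * (S1 n + S2 n)⁻¹‖ :=
  calc Real.sqrt n / 8 = ‖(S1 n * (S1 n + S2 n)⁻¹) 0 1‖ := by
        rw [S1_mul_inv_S1_add_S2 hn]
        simp [abs_of_nonneg]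
    _ ≤ _ := norm_entry_le_linfty_opNorm _ 0 1

/-- the family S₁(S₁+S₂)⁻¹ with S₁, S₂ symmetric positive
definite is unbounded: for each n ≥ 1 the given S₁, S₂ are positive definite,
S₁(S₁+S₂)⁻¹ is the explicit matrix below, and its norm tends to infinity. -/
theorem stmt19 :
    (∀ n : ℕ, 1 ≤ n →
      (S1 n).PosDef ∧ (S2 n).PosDef ∧
      S1 n * (S1 n + S2 n)⁻¹ =
        !![(1:ℝ)/2, Real.sqrt n / 8; 1/(8 * Real.sqrt n), 1/2]) ∧
    Tendsto (fun n : ℕ => ‖S1 n * (S1 n + S2 n)⁻¹‖) atTop atTop := by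
  refine ⟨fun n hn => ⟨S1_posDef hn, S2_posDef hn, S1_mul_inv_S1_add_S2 hn⟩, ?_⟩
  have hsqrt : Tendsto (fun n : ℕ => Real.sqrt n / 8) atTop atTop :=
    (Real.tendsto_sqrt_atTop.comp tendsto_natCast_atTop_atTop).atTop_div_const (by norm_num)
  exact tendsto_atTop_mono' _
    ((eventually_ge_atTop 1).mono fun _ => sqrt_div_eight_le_norm_S1_mul_inv_S1_add_S2) hsqrt
end
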